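/- There exists a circulant weighing matrix CW(198, 100); that is, there exists a vector a ∈ {0, 1, −1}^{198} such that the circulant matrix W = c(a) satisfies W Wᵀ = 100 I, where I is the 198×198 identity matrix. -/

import Mathlib

/-!
The entry `(i, j)` of `c(a) c(a)ᵀ` is the periodic autocorrelation of `a` at the shift `j - i`,
so any `{0, ±1}`-sequence of length 198 whose autocorrelation is `100` at shift `0` and vanishes
at every other shift gives a `CW(198, 100)`. One such sequence is exhibited explicitly, and its
198 autocorrelation values are verified by evaluation.
-/

open Matrix

/-- The circulant matrix `c(a)` with entries `c(a)_{i,j} = a_{(j-i) mod n}`. -/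
def circ {n : ℕ} (a : Fin n → ℝ) : Matrix (Fin n) (Fin n) ℝ :=
  Matrix.of fun i j => a (j - i)

def periodicAutocorrelation {G R : Type*} [Fintype G] [AddGroup G] [Semiring R]
    (a : G → R) (d : G) : R :=
  ∑ k, a k * a (k - d)

theorem periodicAutocorrelation_map {G R S : Type*} [Fintype G] [AddGroup G] [Semiring R]
    [Semiring S] (f : R →+* S) (a : G → R) (d : G) :
    periodicAutocorrelation (f ∘ a) d = f (periodicAutocorrelation a d) := by
  simp [periodicAutocorrelation]

theorem circ_mul_transpose_apply {n : ℕ} [NeZero n] (a : Fin n → ℝ) (i j : Fin n) :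
    (circ a * (circ a)ᵀ) i j = periodicAutocorrelation a (j - i) := by
  simp only [circ, mul_apply, transpose_apply, of_apply, periodicAutocorrelation]
  rw [← Equiv.sum_comp (Equiv.addRight i)]
  refine Fintype.sum_congr _ _ fun k => ?_
  simp only [Equiv.coe_addRight, add_sub_cancel_right]
  congr 2
  abel

theorem circ_mul_transpose_eq_smul_one {n : ℕ} [NeZero n] (a : Fin n → ℝ) (c : ℝ)
    (h : ∀ d, periodicAutocorrelation a d = if d = 0 then c else 0) :
    circ a * (circ a)ᵀ = c • (1 : Matrix (Fin n) (Fin n) ℝ) := by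
  ext i j
  rw [circ_mul_transpose_apply, h]
  simp [one_apply, sub_eq_zero, eq_comm]

def cw198 (i : Fin 198) : ℤ :=
  if i.val ∈ [6, 7, 10, 16, 18, 19, 22, 24, 25, 28, 40, 46, 51, 54, 55, 58, 63, 70, 72, 73, 82,
      87, 90, 91, 96, 97, 105, 117, 123, 130, 136, 142, 150, 151, 153, 160, 162, 163, 171, 178,
      184, 186, 187, 189, 195] then 1
  else if i.val ∈ [9, 15, 21, 27, 30, 31, 36, 37, 39, 42, 43, 45, 52, 57, 60, 61, 64, 69, 78, 79,
      81, 84, 85, 88, 106, 108, 109, 114, 115, 118, 120, 121, 124, 126, 127, 129, 135, 138, 139,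
      141, 144, 145, 154, 156, 157, 159, 168, 169, 172, 177, 180, 181, 183, 190, 196] then -1
  else 0

/-- `cw198` with its supports encoded as bit masks, which the kernel evaluates much faster than
list membership. -/
def cw198Bits (i : Fin 198) : ℤ :=
  if Nat.testBit 51320596808572682488200109858824338326647236063311254324416 i.val then 1
  else if Nat.testBit 102019959322697348521834647060286432114757223999646143119872 i.val then -1
  else 0

theorem cw198Bits_eq : cw198Bits = cw198 := by
  funext i
  revert i
  decide +kernel

theorem periodicAutocorrelation_cw198 (d : Fin 198) :
    periodicAutocorrelation cw198 d = if d = 0 then 100 else 0 := by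
  rw [← cw198Bits_eq]
  revert d
  decide +kernel

theorem cw198_mem (i : Fin 198) : cw198 i = 0 ∨ cw198 i = 1 ∨ cw198 i = -1 := by
  unfold cw198
  split_ifs <;> simp

/-- There exists a circulant weighing matrix `CW(198, 100)`. -/
theorem exists_CW_198_100 :
    ∃ a : Fin 198 → ℝ, (∀ s, a s ∈ ({0, 1, -1} : Set ℝ)) ∧
      circ a * (circ a)ᵀ = (100 : ℝ) • (1 : Matrix (Fin 198) (Fin 198) ℝ) := by
  refine ⟨Int.castRingHom ℝ ∘ cw198, fun s => ?_, circ_mul_transpose_eq_smul_one _ _ fun d => ?_⟩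
  · rcases cw198_mem s with h | h | h <;> simp [h]
  · rw [periodicAutocorrelation_map, periodicAutocorrelation_cw198]
    split_ifs <;> simp
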